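/- arXiv:1701.08555 — 2 statements merged into one kernel-verified Lean document; each statement's English description precedes it below -/
import Mathlib

section
/- Fix r_1 < ... < r_k with d = gcd(r_1,...,r_k), and n > r_k² with M_n primitive. Then the delta set of M_n equals {d}: for every a ∈ M_n whose length set L(a) has at least two elements, every pair of consecutive elements of L(a) differs by exactly d. -/
/-! Write a factorization of length `ℓ` of `a` as `a = ℓ n + Σ c_i r_i` with `Σ c_i ≤ ℓ`. As
`gcd(d, n) = 1`, two lengths of `a` differ by a multiple of `d`. If two lengths `ℓ < ℓ'` differ
by at least `2d`, then `T = Σ c_i r_i - d n` is a multiple of `d` exceeding `r_k²`. Some sum of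
fewer than `r_k` of the `r_i` is congruent to `T` modulo `r_k` (a shortest one has pairwise
distinct prefix sums mod `r_k`), and a multiple of `r_k` makes up the rest; this writes `T` with
so few summands that `a = (ℓ + d) n + T` gives a factorization of length `ℓ + d`, strictly
between `ℓ` and `ℓ'`. Conversely, `d n` is such a `T`, and `ℓ n + 2 d n = (ℓ + d) n + d n`
realises the gap `d`. -/

open Finset

/-- Length of a factorization. -/
def vlen {m : ℕ} (z : Fin m → ℕ) : ℕ := ∑ i, z i

/-- Factorization homomorphism of `M_n = ⟨n, n+r_1, ..., n+r_k⟩`. -/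
def piM (k n : ℕ) (r : Fin (k + 1) → ℕ) (z : Fin (k + 2) → ℕ) : ℕ :=
  z 0 * n + ∑ i : Fin (k + 1), z i.succ * (n + r i)

/-- Two factorizations of `β` lie in the same connected component of the factorization
graph `∇_β`: there is a path of factorizations of `β`, consecutive ones sharing a
common positive coordinate. -/
def SameComp {m : ℕ} (π : (Fin m → ℕ) → ℕ) (β : ℕ) :
    (Fin m → ℕ) → (Fin m → ℕ) → Prop :=
  Relation.ReflTransGen (fun a b => π a = β ∧ π b = β ∧ ∃ i, 0 < a i ∧ 0 < b i)

/-- `β` is a Betti element: its factorization graph is disconnected. -/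
def IsBetti {m : ℕ} (π : (Fin m → ℕ) → ℕ) (β : ℕ) : Prop :=
  ∃ z z', π z = β ∧ π z' = β ∧ ¬ SameComp π β z z'

/-- The map `Φ_n` on pairs of factorizations. -/
def Phi (k : ℕ) (p : (Fin (k + 2) → ℕ) × (Fin (k + 2) → ℕ)) :
    (Fin (k + 2) → ℕ) × (Fin (k + 2) → ℕ) :=
  if vlen p.2 < vlen p.1 then
    (p.1 + (vlen p.1 - vlen p.2) • Pi.single (0 : Fin (k + 2)) 1,
     p.2 + (vlen p.1 - vlen p.2) • Pi.single (Fin.last (k + 1)) 1)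
  else if vlen p.1 < vlen p.2 then
    (p.1 + (vlen p.2 - vlen p.1) • Pi.single (Fin.last (k + 1)) 1,
     p.2 + (vlen p.2 - vlen p.1) • Pi.single (0 : Fin (k + 2)) 1)
  else p

/-- The congruence generated by a set of relations `ρ`. -/
inductive CongGen {m : ℕ} (ρ : Set ((Fin m → ℕ) × (Fin m → ℕ))) :
    (Fin m → ℕ) → (Fin m → ℕ) → Prop
  | of {z z'} : (z, z') ∈ ρ → CongGen ρ z z'
  | refl (z) : CongGen ρ z z
  | symm {z z'} : CongGen ρ z z' → CongGen ρ z' z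
  | trans {x y z} : CongGen ρ x y → CongGen ρ y z → CongGen ρ x z
  | add {z z'} (u) : CongGen ρ z z' → CongGen ρ (z + u) (z' + u)

/-- `ρ` is a presentation for the monoid with factorization homomorphism `π`. -/
def IsPres {m : ℕ} (π : (Fin m → ℕ) → ℕ)
    (ρ : Set ((Fin m → ℕ) × (Fin m → ℕ))) : Prop :=
  (∀ p ∈ ρ, π p.1 = π p.2) ∧ ∀ z z', CongGen ρ z z' ↔ π z = π z'

/-- `ρ` is a minimal presentation. -/
def IsMinPres {m : ℕ} (π : (Fin m → ℕ) → ℕ)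
    (ρ : Set ((Fin m → ℕ) × (Fin m → ℕ))) : Prop :=
  IsPres π ρ ∧ ∀ ρ' ⊆ ρ, IsPres π ρ' → ρ' = ρ

/-- Primitivity of `M_n`: the gcd of the generators is 1. -/
def Primitive (k n : ℕ) (r : Fin (k + 1) → ℕ) : Prop :=
  Nat.gcd n (Finset.univ.gcd fun i : Fin (k + 1) => n + r i) = 1

/-- Distance between two factorizations. -/
def fdist {m : ℕ} (z z' : Fin m → ℕ) : ℕ :=
  max (∑ i, (z i - min (z i) (z' i))) (∑ i, (z' i - min (z i) (z' i)))

theorem List.exists_sublist_length_lt_card_sum_map_eq {ι G : Type*} [AddMonoid G] [Fintype G]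
    (f : ι → G) (l : List ι) :
    ∃ l' : List ι, l'.Sublist l ∧ l'.length < Fintype.card G ∧ (l'.map f).sum = (l.map f).sum := by
  induction h : l.length using Nat.strong_induction_on generalizing l with
  | _ L ih =>
    by_cases hL : L < Fintype.card G
    · exact ⟨l, .refl l, h ▸ hL, rfl⟩
    -- Two equal prefix sums let us cut out the segment between them.
    obtain ⟨i, j, hij, hsum⟩ := Fintype.exists_ne_map_eq_of_card_lt
      (fun j : Fin (L + 1) => ((l.take j).map f).sum) (by simpa using hL)
    wlog hlt : i < j generalizing i j
    · exact this j i hij.symm hsum.symm (lt_of_le_of_ne (not_lt.1 hlt) hij.symm)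
    have hcut : ((l.take i ++ l.drop j).map f).sum = (l.map f).sum := by
      rw [List.map_append, List.sum_append, hsum, ← List.sum_append, ← List.map_append,
        List.take_append_drop]
    have hshorter : (l.take i ++ l.drop j).length < L := by
      simp only [List.length_append, List.length_take, List.length_drop]
      omega
    obtain ⟨l', hsub, hlen, hl'⟩ := ih _ hshorter _ rfl
    refine ⟨l', hsub.trans ?_, hlen, hl'.trans hcut⟩
    simpa using (l.drop_sublist_drop_left hlt.le).append_left (l.take i)

theorem AddSubmonoid.exists_sum_lt_card_of_mem_closure_range {ι G : Type*} [Fintype ι]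
    [AddCommMonoid G] [Fintype G] {f : ι → G} {x : G}
    (hx : x ∈ AddSubmonoid.closure (Set.range f)) :
    ∃ e : ι → ℕ, ∑ i, e i < Fintype.card G ∧ x = ∑ i, e i • f i := by
  classical
  obtain ⟨a, rfl⟩ := AddSubmonoid.mem_closure_range_iff_of_fintype.1 hx
  obtain ⟨l, -, hlen, hsum⟩ :=
    List.exists_sublist_length_lt_card_sum_map_eq f (∑ i, a i • {i} : Multiset ι).toList
  refine ⟨fun i => l.count i, by simpa [← Multiset.coe_count] using hlen, ?_⟩
  calc ∑ i, a i • f i = (l.map f).sum := by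
        rw [hsum, Multiset.sum_map_toList, ← Multiset.coe_mapAddMonoidHom, map_sum,
          ← Multiset.coe_sumAddMonoidHom, map_sum]
        simp [Multiset.map_nsmul, Multiset.sum_nsmul]
    _ = ∑ i, l.count i • f i := by
      rw [Finset.sum_list_map_count]
      exact Finset.sum_subset (subset_univ _) fun i _ hi => by
        rw [List.count_eq_zero.2 (List.mem_toFinset.not.1 hi), zero_smul]

theorem Finset.natCast_gcd {ι : Type*} (s : Finset ι) (f : ι → ℕ) :
    ((s.gcd f : ℕ) : ℤ) = s.gcd fun i => (f i : ℤ) := by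
  classical
  induction s using Finset.induction_on with
  | empty => simp
  | insert a s ha ih =>
    rw [gcd_insert, gcd_insert, ← ih, ← Int.coe_gcd, Int.gcd_natCast_natCast]
    rfl

theorem exists_sum_lt_modEq_of_gcd_dvd {ι : Type*} [Fintype ι] (r : ι → ℕ) {m T : ℕ}
    (hm : 0 < m) (hT : univ.gcd r ∣ T) :
    ∃ e : ι → ℕ, ∑ i, e i < m ∧ ∑ i, e i * r i ≡ T [MOD m] := by
  have := NeZero.of_pos hm
  obtain ⟨t, rfl⟩ := hT
  obtain ⟨g, hg⟩ := univ.gcd_eq_sum_mul fun i => (r i : ℤ)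
  have hmem : ((univ.gcd r * t : ℕ) : ZMod m) ∈
      AddSubmonoid.closure (Set.range fun i => (r i : ZMod m)) := by
    rw [← AddSubgroup.closure_toAddSubmonoid_of_finite]
    refine AddSubgroup.mem_closure_range_iff_of_fintype.2 ⟨fun i => g i * t, ?_⟩
    have hcast := congrArg (fun z : ℤ => ((z * t : ℤ) : ZMod m)) hg
    simp only [← Finset.natCast_gcd, Finset.sum_mul] at hcast
    push_cast at hcast ⊢
    rw [hcast]
    exact Finset.sum_congr rfl fun i _ => by rw [zsmul_eq_mul]; push_cast; ring
  obtain ⟨e, he, hsum⟩ := AddSubmonoid.exists_sum_lt_card_of_mem_closure_range hmem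
  refine ⟨e, by simpa using he, ?_⟩
  rw [← ZMod.natCast_eq_natCast_iff, hsum]
  push_cast
  simp [nsmul_eq_mul]

theorem exists_sum_mul_eq_of_sq_le {ι : Type*} [Fintype ι] {r : ι → ℕ} {i₀ : ι}
    (hr : ∀ i, r i ≤ r i₀) (hi₀ : 0 < r i₀) {T : ℕ} (hdT : univ.gcd r ∣ T)
    (hT : r i₀ ^ 2 ≤ T) :
    ∃ c : ι → ℕ, ∑ i, c i * r i = T ∧ (∑ i, c i) * r i₀ < r i₀ ^ 2 + T := by
  classical
  set m := r i₀
  obtain ⟨e, he, hmod⟩ := exists_sum_lt_modEq_of_gcd_dvd r hi₀ hdT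
  set E := ∑ i, e i * r i
  have hEm : E ≤ (∑ i, e i) * m := by
    rw [Finset.sum_mul]
    exact Finset.sum_le_sum fun i _ => Nat.mul_le_mul_left _ (hr i)
  have hem : (∑ i, e i) * m < m ^ 2 := by
    rw [sq]
    exact Nat.mul_lt_mul_of_pos_right he hi₀
  -- Correct the residue `E ≡ T` by a multiple of the largest generator.
  obtain ⟨j, hj⟩ := (Nat.modEq_iff_dvd' (by omega)).1 hmod
  have hjm : j * m = T - E := by rw [hj, mul_comm]
  refine ⟨fun i => e i + if i = i₀ then j else 0, ?_, ?_⟩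
  · simp only [add_mul, ite_mul, zero_mul, Finset.sum_add_distrib, Finset.sum_ite_eq', mem_univ,
      if_true]
    change E + j * m = T
    omega
  · simp only [Finset.sum_add_distrib, Finset.sum_ite_eq', mem_univ, if_true, add_mul]
    omega

def lengthSet (k n : ℕ) (r : Fin (k + 1) → ℕ) (a : ℕ) : Set ℕ :=
  {ℓ | ∃ z, piM k n r z = a ∧ vlen z = ℓ}

section ShiftedMonoid

variable {k n : ℕ} {r : Fin (k + 1) → ℕ}

theorem piM_eq_vlen_mul_add (z : Fin (k + 2) → ℕ) :
    piM k n r z = vlen z * n + ∑ i, z i.succ * r i := by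
  simp only [piM, vlen, Fin.sum_univ_succ (f := z), mul_add, add_mul, Finset.sum_add_distrib,
    Finset.sum_mul]
  ring

theorem mem_lengthSet_iff {a ℓ : ℕ} :
    ℓ ∈ lengthSet k n r a ↔ ∃ c : Fin (k + 1) → ℕ, ∑ i, c i ≤ ℓ ∧ ℓ * n + ∑ i, c i * r i = a := by
  constructor
  · rintro ⟨z, rfl, rfl⟩
    refine ⟨fun i => z i.succ, ?_, (piM_eq_vlen_mul_add z).symm⟩
    simp only [vlen, Fin.sum_univ_succ (f := z)]
    omega
  · rintro ⟨c, hc, rfl⟩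
    have hlen : vlen (Fin.cons (ℓ - ∑ i, c i) c : Fin (k + 2) → ℕ) = ℓ := by
      simp only [vlen, Fin.sum_cons]
      omega
    exact ⟨Fin.cons (ℓ - ∑ i, c i) c, by simp [piM_eq_vlen_mul_add, hlen], hlen⟩

theorem Primitive.coprime_gcd (h : Primitive k n r) : (univ.gcd r).Coprime n := by
  have hdvd : (univ.gcd r).gcd n ∣ n.gcd (univ.gcd fun i => n + r i) :=
    Nat.dvd_gcd (Nat.gcd_dvd_right _ _) (Finset.dvd_gcd fun i _ => dvd_add (Nat.gcd_dvd_right _ _)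
      ((Nat.gcd_dvd_left _ _).trans (Finset.gcd_dvd (mem_univ i))))
  rw [h] at hdvd
  exact Nat.dvd_one.1 hdvd

theorem gcd_dvd_sum_mul (c : Fin (k + 1) → ℕ) : univ.gcd r ∣ ∑ i, c i * r i :=
  Finset.dvd_sum fun i _ => dvd_mul_of_dvd_right (Finset.gcd_dvd (mem_univ i)) _

theorem gcd_dvd_sub_of_mem_lengthSet (hcop : (univ.gcd r).Coprime n) {a ℓ₁ ℓ₂ : ℕ}
    (h₁ : ℓ₁ ∈ lengthSet k n r a) (h₂ : ℓ₂ ∈ lengthSet k n r a) : univ.gcd r ∣ ℓ₂ - ℓ₁ := by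
  obtain ⟨c₁, -, hc₁⟩ := mem_lengthSet_iff.1 h₁
  obtain ⟨c₂, -, hc₂⟩ := mem_lengthSet_iff.1 h₂
  have hdiff : (ℓ₂ - ℓ₁) * n = ∑ i, c₁ i * r i - ∑ i, c₂ i * r i := by
    rw [Nat.sub_mul]
    omega
  exact hcop.dvd_of_dvd_mul_right (hdiff ▸ Nat.dvd_sub (gcd_dvd_sum_mul c₁) (gcd_dvd_sum_mul c₂))

variable (hr : Monotone r) (hm : 0 < r (Fin.last k)) (hn : r (Fin.last k) ^ 2 < n)
include hr hm hn

theorem add_gcd_mem_lengthSet {a ℓ ℓ' : ℕ} (h : ℓ ∈ lengthSet k n r a)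
    (h' : ℓ' ∈ lengthSet k n r a) (hgap : ℓ + 2 * univ.gcd r ≤ ℓ') :
    ℓ + univ.gcd r ∈ lengthSet k n r a := by
  obtain ⟨c, hc, rfl⟩ := mem_lengthSet_iff.1 h
  obtain ⟨c', -, hc'⟩ := mem_lengthSet_iff.1 h'
  have hSm : ∑ i, c i * r i ≤ ℓ * r (Fin.last k) := calc
    ∑ i, c i * r i ≤ (∑ i, c i) * r (Fin.last k) := by
      rw [Finset.sum_mul]
      exact Finset.sum_le_sum fun i _ => Nat.mul_le_mul_left _ (hr (Fin.le_last i))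
    _ ≤ ℓ * r (Fin.last k) := Nat.mul_le_mul_right _ hc
  have hSd : 2 * (univ.gcd r * n) ≤ ∑ i, c i * r i := by
    have := Nat.mul_le_mul_right n hgap
    rw [add_mul, mul_assoc] at this
    omega
  have hdn : n ≤ univ.gcd r * n :=
    Nat.le_mul_of_pos_left n (Nat.pos_of_dvd_of_pos (Finset.gcd_dvd (mem_univ _)) hm)
  -- `a = (ℓ + d) n + (S - d n)` for `S = Σ c_i r_i`, and `S - d n` needs fewer than `ℓ` summands.
  obtain ⟨c₂, hc₂, hc₂m⟩ := exists_sum_mul_eq_of_sq_le (i₀ := Fin.last k)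
    (fun i => hr (Fin.le_last i)) hm (Nat.dvd_sub (gcd_dvd_sum_mul c) (dvd_mul_right _ n))
    (T := ∑ i, c i * r i - univ.gcd r * n) (by omega)
  refine mem_lengthSet_iff.2 ⟨c₂, ?_, by rw [hc₂, add_mul]; omega⟩
  have : ∑ i, c₂ i < ℓ := Nat.lt_of_mul_lt_mul_right (a := r (Fin.last k)) (by omega)
  omega

theorem exists_add_gcd_mem_lengthSet :
    ∃ a ℓ, ℓ ∈ lengthSet k n r a ∧ ℓ + univ.gcd r ∈ lengthSet k n r a := by
  set d := univ.gcd r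
  have hd : 0 < d := Nat.pos_of_dvd_of_pos (Finset.gcd_dvd (mem_univ _)) hm
  obtain ⟨c, hc, -⟩ := exists_sum_mul_eq_of_sq_le (i₀ := Fin.last k)
    (fun i => hr (Fin.le_last i)) hm (dvd_mul_right d n)
    (by nlinarith [Nat.le_mul_of_pos_left n hd])
  -- `c + c` and `c` are factorizations of `ℓ n + 2 d n = (ℓ + d) n + d n`.
  refine ⟨(2 * ∑ i, c i) * n + 2 * (d * n), 2 * ∑ i, c i, mem_lengthSet_iff.2 ⟨c + c, ?_, ?_⟩,
    mem_lengthSet_iff.2 ⟨c, by omega, by rw [hc]; ring⟩⟩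
  · simp [Finset.sum_add_distrib, two_mul]
  · simp [add_mul, Finset.sum_add_distrib, hc, two_mul]

end ShiftedMonoid

/-- For `n > r_k²` with `M_n` primitive, the delta set of `M_n` is `{d}` where
`d = gcd(r_1,...,r_k)`. -/
theorem stmt13 (k n : ℕ) (r : Fin (k + 1) → ℕ) (hmono : StrictMono r) (hpos : 0 < r 0)
    (hn : r (Fin.last k) ^ 2 < n) (hprim : Primitive k n r) :
    {δ | ∃ a ℓ ℓ' : ℕ,
        (∃ z, piM k n r z = a ∧ vlen z = ℓ) ∧
        (∃ z, piM k n r z = a ∧ vlen z = ℓ') ∧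
        ℓ < ℓ' ∧
        (∀ m', ℓ < m' → m' < ℓ' → ¬ ∃ z, piM k n r z = a ∧ vlen z = m') ∧
        δ = ℓ' - ℓ}
      = {Finset.univ.gcd r} := by
  have hr : Monotone r := hmono.monotone
  have hm : 0 < r (Fin.last k) := hpos.trans_le (hr (Fin.zero_le _))
  have hd : 0 < univ.gcd r := Nat.pos_of_dvd_of_pos (Finset.gcd_dvd (mem_univ 0)) hpos
  ext δ
  constructor
  · rintro ⟨a, ℓ, ℓ', h, h', hlt, hgap, rfl⟩
    obtain ⟨t, ht⟩ := gcd_dvd_sub_of_mem_lengthSet hprim.coprime_gcd h h'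
    obtain _ | _ | t := t
    · omega
    · simpa using ht
    · have : univ.gcd r * 2 ≤ univ.gcd r * (t + 1 + 1) := Nat.mul_le_mul_left _ (by omega)
      exact absurd (add_gcd_mem_lengthSet hr hm hn h h' (by omega)) (hgap _ (by omega) (by omega))
  · rintro rfl
    obtain ⟨a, ℓ, h, h'⟩ := exists_add_gcd_mem_lengthSet hr hm hn
    refine ⟨a, ℓ, ℓ + univ.gcd r, h, h', by omega, fun ℓ'' hlt hlt' h'' => ?_, by omega⟩
    obtain ⟨t, ht⟩ := gcd_dvd_sub_of_mem_lengthSet hprim.coprime_gcd h h''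
    obtain _ | t := t
    · omega
    · have : univ.gcd r ≤ univ.gcd r * (t + 1) := Nat.le_mul_of_pos_right _ t.succ_pos
      omega
end

section
/- Fix r_1 < ... < r_k, n ∈ ℕ, and ℓ ∈ ℕ. The map z ↦ (z_1,...,z_k) is a bijection from the set of factorizations of β ∈ M_n of length exactly ℓ onto the set of factorizations in S = ⟨r_1,...,r_k⟩ of β − ℓn of length at most ℓ, whenever β ≥ ℓn. -/
open Finset

lemma piM_eq (k n : ℕ) (r : Fin (k + 1) → ℕ) (z : Fin (k + 2) → ℕ) :
    piM k n r z = vlen z * n + ∑ i, z i.succ * r i := by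
  simp only [piM, vlen, Fin.sum_univ_succ, mul_add, Finset.sum_add_distrib, add_mul,
    Finset.sum_mul]
  ring

lemma vlen_succ (k : ℕ) (z : Fin (k + 2) → ℕ) :
    vlen z = z 0 + ∑ i : Fin (k + 1), z i.succ := by
  simp [vlen, Fin.sum_univ_succ]

/-- Dropping the first coordinate is a bijection from length-`ℓ` factorizations of
`β` in `M_n` onto factorizations of `β - ℓn` in `S` of length at most `ℓ`. -/
theorem stmt16 (k n ℓ : ℕ) (r : Fin (k + 1) → ℕ) (hmono : StrictMono r) (hpos : 0 < r 0)
    (β : ℕ) (hβ : ℓ * n ≤ β) :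
    Set.BijOn (fun (z : Fin (k + 2) → ℕ) => fun i : Fin (k + 1) => z i.succ)
      {z | piM k n r z = β ∧ vlen z = ℓ}
      {s : Fin (k + 1) → ℕ | (∑ i, s i * r i = β - ℓ * n) ∧ vlen s ≤ ℓ} := by
  refine ⟨?_, ?_, ?_⟩
  · rintro z ⟨h1, h2⟩
    rw [piM_eq, h2] at h1
    have hv := vlen_succ k z
    rw [h2] at hv
    simp only [Set.mem_setOf_eq]
    constructor
    · omega
    · simp only [vlen]; omega
  · rintro z1 ⟨h1, l1⟩ z2 ⟨h2, l2⟩ heq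
    have hs : ∑ i : Fin (k + 1), z1 i.succ = ∑ i : Fin (k + 1), z2 i.succ := by
      exact Finset.sum_congr rfl fun i _ => congrFun heq i
    have hv1 := vlen_succ k z1
    have hv2 := vlen_succ k z2
    funext i
    refine Fin.cases ?_ ?_ i
    · omega
    · intro j; exact congrFun heq j
  · rintro s ⟨h1, h2⟩
    refine ⟨Fin.cons (ℓ - vlen s) s, ⟨?_, ?_⟩, ?_⟩
    · rw [piM_eq]
      have hv : vlen (Fin.cons (ℓ - vlen s) s : Fin (k + 2) → ℕ) = ℓ := by
        rw [vlen_succ]; simp only [Fin.cons_zero, Fin.cons_succ]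
        simp only [vlen] at h2 ⊢; omega
      rw [hv]
      simp only [Fin.cons_succ]
      omega
    · rw [vlen_succ]; simp only [Fin.cons_zero, Fin.cons_succ]
      simp only [vlen] at h2 ⊢; omega
    · funext i; simp [Fin.cons_succ]
end
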